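/- Let g be CN-war-stable with equal strengths and γ ≥ 1, and let i be a vertex of maximum degree with a link ij ∈ g. Then any clique C in g − ij witnessing the CN-vulnerability of i in g − ij (i.e., |C| > γ·(1 + |N_i(g−ij)\C|), i ∉ C) must satisfy C ∩ N_i(g−ij) ≠ ∅, i ∉ C, and j ∉ C. -/

import Mathlib

open Finset

/-- The allies (neighbors) of `i` in network `g`, as a `Finset`. -/
noncomputable def nbrs {V : Type*} [Fintype V] (g : SimpleGraph V) (i : V) : Finset V :=
  @Finset.filter _ (fun j => g.Adj i j) (Classical.decPred _) Finset.univ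

/-- The network `g` with the alliance `jk` added. -/
def addE {V : Type*} (g : SimpleGraph V) (j k : V) : SimpleGraph V :=
  g ⊔ SimpleGraph.fromEdgeSet {s(j, k)}

/-- The network `g` with the alliance `jk` deleted. -/
def delE {V : Type*} (g : SimpleGraph V) (j k : V) : SimpleGraph V :=
  g.deleteEdges {s(j, k)}

/-- CN-vulnerability with uniform strengths `M C = |C|` and constant `γ`:
country `i` is CN-vulnerable at `g` if some clique `C` of `g` not containing `i`
satisfies `|C| > γ · (1 + |N_i(g) \ C|)`. -/
def CNVul {V : Type*} [Fintype V] [DecidableEq V] (g : SimpleGraph V) (γ : ℝ) (i : V) :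
    Prop :=
  ∃ C : Finset V, g.IsClique ↑C ∧ i ∉ C ∧
    γ * (1 + ((nbrs g i) \ C).card) < (C.card : ℝ)

/-- CN-war-stability: (S1) no country CN-vulnerable; (S2) no country CN-vulnerable after
adding any non-link; (S3) both endpoints of any link become CN-vulnerable upon its
deletion. -/
def CNWarStable {V : Type*} [Fintype V] [DecidableEq V] (g : SimpleGraph V) (γ : ℝ) :
    Prop :=
  (∀ v : V, ¬ CNVul g γ v) ∧
  (∀ j k : V, j ≠ k → ¬ g.Adj j k → ∀ v : V, ¬ CNVul (addE g j k) γ v) ∧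
  (∀ j k : V, g.Adj j k → CNVul (delE g j k) γ j ∧ CNVul (delE g j k) γ k)

/-! If the witness `C` contained `j`, deleting `ij` would not change `N_i \ C`, so `i` would
already be vulnerable in `g`. If `C` missed the remaining allies of `i`, then
`γ d < |C|` for the maximum degree `d`; a clique that large is a complete component
`K_{d+1}`, and the stability of its members forces `d ≤ γ`, hence `d = 1` and `γ < 2`. Then
`j` is a leaf attached to `i`, and once `i` is linked to a member of `C` that pair
overwhelms `j`, contradicting (S2). -/

section

variable {V : Type*} [Fintype V] {g : SimpleGraph V} {γ : ℝ}

@[simp]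
lemma mem_nbrs {i x : V} : x ∈ nbrs g i ↔ g.Adj i x := by
  simp [nbrs]

lemma nbrs_addE_of_ne {i c j : V} (hji : j ≠ i) (hjc : j ≠ c) :
    nbrs (addE g i c) j = nbrs g j := by
  ext x
  simp only [mem_nbrs, addE, SimpleGraph.sup_adj, SimpleGraph.fromEdgeSet_adj,
    Set.mem_singleton_iff, Sym2.eq, Sym2.rel_iff', Prod.mk.injEq, Prod.swap_prod_mk]
  grind

variable [DecidableEq V]

lemma nbrs_delE_self (i j : V) : nbrs (delE g i j) i = (nbrs g i).erase j := by
  ext x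
  simp only [mem_nbrs, delE, SimpleGraph.deleteEdges_adj, Set.mem_singleton_iff,
    Finset.mem_erase, Sym2.congr_right]
  tauto

lemma card_le_of_not_cnVul {v : V} {C : Finset V} (hv : ¬ CNVul g γ v)
    (hC : g.IsClique (C : Set V)) (hvC : v ∉ C) :
    (C.card : ℝ) ≤ γ * (1 + ((nbrs g v) \ C).card) :=
  not_lt.1 fun hlt => hv ⟨C, hC, hvC, hlt⟩

lemma cnVul_of_witness_delE_of_mem {i j : V} {C : Finset V}
    (hC : (delE g i j).IsClique (C : Set V)) (hiC : i ∉ C) (hjC : j ∈ C)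
    (hwin : γ * (1 + ((nbrs (delE g i j) i) \ C).card) < (C.card : ℝ)) : CNVul g γ i := by
  refine ⟨C, hC.mono (SimpleGraph.deleteEdges_le _), hiC, ?_⟩
  rwa [nbrs_delE_self, Finset.erase_sdiff_comm,
    Finset.erase_eq_of_notMem fun h => (Finset.mem_sdiff.1 h).2 hjC] at hwin

namespace SimpleGraph.IsClique

variable {C : Finset V} {d : ℕ}

lemma erase_subset_nbrs (hC : g.IsClique (C : Set V)) {c : V} (hc : c ∈ C) :
    C.erase c ⊆ nbrs g c := fun _ hx =>
  mem_nbrs.2 <| hC hc (Finset.mem_of_mem_erase hx) (Finset.ne_of_mem_erase hx).symm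

lemma card_eq_succ (hmax : ∀ v, (nbrs g v).card ≤ d) (hC : g.IsClique (C : Set V))
    (hd : d < C.card) : C.card = d + 1 := by
  obtain ⟨c, hc⟩ := Finset.card_pos.1 (d.zero_le.trans_lt hd)
  have := (Finset.card_le_card (hC.erase_subset_nbrs hc)).trans (hmax c)
  rw [Finset.card_erase_of_mem hc] at this
  omega

lemma nbrs_eq_erase (hmax : ∀ v, (nbrs g v).card ≤ d) (hC : g.IsClique (C : Set V))
    (hd : d < C.card) {c : V} (hc : c ∈ C) : nbrs g c = C.erase c := by
  refine (Finset.eq_of_subset_of_card_le (hC.erase_subset_nbrs hc) ?_).symm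
  rw [Finset.card_erase_of_mem hc, hC.card_eq_succ hmax hd]
  exact hmax c

lemma card_eq_succ_and_le_one (hS1 : ∀ v, ¬ CNVul g γ v) (hγ : 1 ≤ γ)
    (hmax : ∀ v, (nbrs g v).card ≤ d) (hC : g.IsClique (C : Set V))
    (hwin : γ * d < C.card) : C.card = d + 1 ∧ d ≤ 1 := by
  have hdC : d < C.card := by
    exact_mod_cast (le_mul_of_one_le_left (Nat.cast_nonneg d) hγ).trans_lt hwin
  have hCcard := hC.card_eq_succ hmax hdC
  obtain ⟨c, hc⟩ := Finset.card_pos.1 (d.zero_le.trans_lt hdC)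
  have hdγ : (d : ℝ) ≤ γ := by
    have := card_le_of_not_cnVul (hS1 c) (hC.subset (Finset.erase_subset c C))
      (Finset.notMem_erase c C)
    rwa [hC.nbrs_eq_erase hmax hdC hc, Finset.sdiff_self, Finset.card_empty,
      Finset.card_erase_of_mem hc, hCcard, Nat.add_sub_cancel, Nat.cast_zero, add_zero,
      mul_one] at this
  have hsq : (d : ℝ) * d < d + 1 :=
    calc (d : ℝ) * d ≤ γ * d := mul_le_mul_of_nonneg_right hdγ (Nat.cast_nonneg d)
      _ < C.card := hwin
      _ = d + 1 := by rw [hCcard]; push_cast; rfl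
  refine ⟨hCcard, ?_⟩
  have : d * d < d + 1 := by exact_mod_cast hsq
  nlinarith

end SimpleGraph.IsClique

lemma cnVul_addE_of_card_nbrs_le_one {i j c : V} (hij : g.Adj i j)
    (hdeg : (nbrs g j).card ≤ 1) (hci : c ≠ i) (hcj : c ≠ j) (hγ : γ < 2) :
    CNVul (addE g i c) γ j := by
  have hji : nbrs g j = {i} := (Finset.eq_of_subset_of_card_le
    (Finset.singleton_subset_iff.2 (mem_nbrs.2 hij.symm)) (by simpa using hdeg)).symm
  refine ⟨{i, c}, ?_, ?_, ?_⟩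
  · rw [Finset.coe_pair, SimpleGraph.isClique_pair]
    intro
    simp [addE, hci.symm]
  · simp [hij.ne.symm, hcj.symm]
  · rw [nbrs_addE_of_ne hij.ne.symm hcj.symm, hji,
      Finset.sdiff_eq_empty_iff_subset.2 (by simp), Finset.card_pair hci.symm]
    simpa using hγ

end

theorem claim_one_general {n : ℕ} (γ : ℝ) (hγ : 1 ≤ γ)
    (g : SimpleGraph (Fin n)) (hstable : CNWarStable g γ)
    (i j : Fin n) (hmax : ∀ v : Fin n, (nbrs g v).card ≤ (nbrs g i).card)
    (hij : g.Adj i j)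
    (C : Finset (Fin n)) (hclique : (delE g i j).IsClique ↑C) (hiC : i ∉ C)
    (hwin : γ * (1 + ((nbrs (delE g i j) i) \ C).card) < (C.card : ℝ)) :
    (C ∩ nbrs (delE g i j) i).Nonempty ∧ i ∉ C ∧ j ∉ C := by
  obtain ⟨hS1, hS2, -⟩ := hstable
  have hjC : j ∉ C := fun hjC => hS1 i (cnVul_of_witness_delE_of_mem hclique hiC hjC hwin)
  refine ⟨?_, hiC, hjC⟩
  rw [nbrs_delE_self] at hwin ⊢
  by_contra hmeet
  have hdisj : Disjoint C ((nbrs g i).erase j) :=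
    Finset.disjoint_iff_inter_eq_empty.2 (Finset.not_nonempty_iff_eq_empty.1 hmeet)
  have hj : j ∈ nbrs g i := mem_nbrs.2 hij
  have hdeg_pos : 0 < (nbrs g i).card := Finset.card_pos.2 ⟨j, hj⟩
  have hwin' : γ * (nbrs g i).card < C.card := by
    rwa [Finset.sdiff_eq_self_of_disjoint hdisj.symm, Finset.card_erase_of_mem hj,
      Nat.cast_pred hdeg_pos, add_sub_cancel] at hwin
  obtain ⟨hCcard, hdeg⟩ := (hclique.mono (SimpleGraph.deleteEdges_le _)).card_eq_succ_and_le_one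
    hS1 hγ hmax hwin'
  have hγ2 : γ < 2 := by
    rw [hCcard, le_antisymm hdeg hdeg_pos] at hwin'
    simpa using hwin'
  obtain ⟨c, hc⟩ : C.Nonempty := Finset.card_pos.1 (by omega)
  have hci : c ≠ i := fun h => hiC (h ▸ hc)
  have hcj : c ≠ j := fun h => hjC (h ▸ hc)
  have hic : ¬ g.Adj i c := fun h =>
    Finset.disjoint_left.1 hdisj hc (Finset.mem_erase.2 ⟨hcj, mem_nbrs.2 h⟩)
  exact hS2 i c hci.symm hic j
    (cnVul_addE_of_card_nbrs_le_one hij ((hmax j).trans hdeg) hci hcj hγ2)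

/-- Claim 1: if `g` is CN-war-stable, `i` has maximum degree, `ij ∈ g`, and
`C` is a clique of `g - ij` witnessing `i`'s CN-vulnerability there, then `C` meets the
remaining neighbors of `i`, and contains neither `i` nor `j`. -/
theorem claim_one {n : ℕ} (hn : 3 ≤ n) (γ : ℝ) (hγ : 1 ≤ γ)
    (g : SimpleGraph (Fin n)) (hstable : CNWarStable g γ)
    (i j : Fin n) (hmax : ∀ v : Fin n, (nbrs g v).card ≤ (nbrs g i).card)
    (hij : g.Adj i j)
    (C : Finset (Fin n)) (hclique : (delE g i j).IsClique ↑C) (hiC : i ∉ C)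
    (hwin : γ * (1 + ((nbrs (delE g i j) i) \ C).card) < (C.card : ℝ)) :
    (C ∩ nbrs (delE g i j) i).Nonempty ∧ i ∉ C ∧ j ∉ C :=
  claim_one_general γ hγ g hstable i j hmax hij C hclique hiC hwin
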